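/- Geometric estimate II: Fix 0 < τ < 1 and a finite family of parallelograms {u_i}_{i∈I} ⊂ S. For each i, let h_{u_i} be the parallelogram with same length, orientation, and center as u_i but 5 times the width, and select s_i ∈ S with s_i ⊆ h_{u_i}, l_{s_i} = l_{u_i}, and |s_i| ≥ τ|h_{u_i}|. Then |⋃_i s_i| ≥ (τ/54)·|⋃_i u_i|. -/
import Mathlib


open MeasureTheory

/-- A parallelogram with two vertical sides: horizontal extent `[q,p]`, lower edge the line
`y = c + m x`, and (vertical) width `w`. -/
def vpar (q p c m w : ℝ) : Set (ℝ × ℝ) :=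
  {z | z.1 ∈ Set.Icc q p ∧ z.2 ∈ Set.Icc (c + m * z.1) (c + m * z.1 + w)}

/-- `hpar q p c m w` is the parallelogram with the same length, orientation and center as
`vpar q p c m w` but `5` times the width. -/
def hpar (q p c m w : ℝ) : Set (ℝ × ℝ) := vpar q p (c - 2 * w) m (5 * w)

lemma disj_Icc {x1 x2 y1 y2 : ℝ} (h : min x2 y2 < max x1 y1) :
    Disjoint (Set.Icc x1 x2) (Set.Icc y1 y2) := by
  rw [Set.disjoint_left]
  rintro z ⟨h1, h2⟩ ⟨h3, h4⟩
  rcases min_lt_iff.mp h with h' | h' <;> rcases lt_max_iff.mp h' with h'' | h'' <;> linarith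

lemma measurableSet_vpar (q p c m w : ℝ) : MeasurableSet (vpar q p c m w) := by
  have h : vpar q p c m w =
      (Prod.fst ⁻¹' Set.Icc q p) ∩
      ({z : ℝ × ℝ | c + m * z.1 ≤ z.2} ∩ {z : ℝ × ℝ | z.2 ≤ c + m * z.1 + w}) := by
    ext z
    simp only [vpar, Set.mem_setOf_eq, Set.mem_Icc, Set.mem_inter_iff, Set.mem_preimage]
  rw [h]
  exact (measurable_fst measurableSet_Icc).inter
    ((measurableSet_le (by fun_prop) measurable_snd).inter
     (measurableSet_le measurable_snd (by fun_prop)))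

lemma vpar_slice (q p c m w x : ℝ) :
    Prod.mk x ⁻¹' vpar q p c m w =
      if x ∈ Set.Icc q p then Set.Icc (c + m * x) (c + m * x + w) else ∅ := by
  by_cases hx : x ∈ Set.Icc q p
  · rw [if_pos hx]
    ext y
    simp [vpar, Set.mem_Icc, hx.1, hx.2]
  · rw [if_neg hx]
    ext y
    simp only [Set.mem_preimage, vpar, Set.mem_setOf_eq, Set.mem_empty_iff_false, iff_false]
    exact fun h => hx h.1

lemma volume_vpar (q p c m w : ℝ) :
    volume (vpar q p c m w) = ENNReal.ofReal (p - q) * ENNReal.ofReal w := by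
  rw [MeasureTheory.Measure.volume_eq_prod ℝ ℝ, Measure.prod_apply (measurableSet_vpar q p c m w)]
  have h : ∀ x, volume (Prod.mk x ⁻¹' vpar q p c m w)
      = Set.indicator (Set.Icc q p) (fun _ => ENNReal.ofReal w) x := by
    intro x
    rw [vpar_slice]
    by_cases hx : x ∈ Set.Icc q p <;> simp [hx, Real.volume_Icc]
  simp_rw [h]
  rw [lintegral_indicator measurableSet_Icc, setLIntegral_const, Real.volume_Icc]
  ring

/-- 1D Vitali-type lemma: if each interval `J i = [b i, b i + w' i]` lies inside the
`5`-fold concentric enlargement of `I i = [a i, a i + w i]` and has length `≥ 5τ w i`,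
then `|⋃ J i| ≥ (τ/3)|⋃ I i|`. -/
lemma one_dim (τ : ℝ) (hτ0 : 0 < τ) {ι : Type} (a w b w' : ι → ℝ) :
    ∀ B : Finset ι,
    (∀ i ∈ B, 0 < w i) → (∀ i ∈ B, 5 * τ * w i ≤ w' i) →
    (∀ i ∈ B, Set.Icc (b i) (b i + w' i) ⊆ Set.Icc (a i - 2 * w i) (a i + 3 * w i)) →
    ENNReal.ofReal (τ / 3) * volume (⋃ i ∈ B, Set.Icc (a i) (a i + w i)) ≤
      volume (⋃ i ∈ B, Set.Icc (b i) (b i + w' i)) := by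
  classical
  intro B
  induction B using Finset.strongInduction with
  | _ B ih =>
    intro hw hw' hsub
    rcases B.eq_empty_or_nonempty with rfl | hne
    · simp
    obtain ⟨i0, hi0, hmax⟩ := B.exists_max_image w hne
    set B' := B.filter (fun i =>
      min (a i + 3 * w i) (a i0 + 3 * w i0) < max (a i - 2 * w i) (a i0 - 2 * w i0)) with hB'
    have hi0' : i0 ∉ B' := by
      simp only [hB', Finset.mem_filter]
      rintro ⟨-, h⟩
      rw [min_self, max_self] at h
      have h0 := hw i0 hi0
      linarith
    have hss : B' ⊂ B :=
      (Finset.ssubset_iff_of_subset (Finset.filter_subset _ _)).mpr ⟨i0, hi0, hi0'⟩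
    have hB'B : B' ⊆ B := Finset.filter_subset _ _
    have IH := ih B' hss (fun i hi => hw i (hB'B hi)) (fun i hi => hw' i (hB'B hi))
      (fun i hi => hsub i (hB'B hi))
    -- covering of the union of I's
    have hcov : (⋃ i ∈ B, Set.Icc (a i) (a i + w i)) ⊆
        Set.Icc (a i0 - 7 * w i0) (a i0 + 8 * w i0) ∪ ⋃ i ∈ B', Set.Icc (a i) (a i + w i) := by
      intro z hz
      simp only [Set.mem_iUnion, exists_prop] at hz
      obtain ⟨i, hiB, hzi⟩ := hz
      by_cases hiB' : i ∈ B'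
      · right
        exact Set.mem_biUnion hiB' hzi
      · left
        have hnd : ¬ (min (a i + 3 * w i) (a i0 + 3 * w i0) <
            max (a i - 2 * w i) (a i0 - 2 * w i0)) := by
          intro hcontra
          exact hiB' (Finset.mem_filter.mpr ⟨hiB, hcontra⟩)
        push_neg at hnd
        have h1 : a i0 - 2 * w i0 ≤ a i + 3 * w i :=
          le_trans (le_max_right _ _) (le_trans hnd (min_le_left _ _))
        have h2 : a i - 2 * w i ≤ a i0 + 3 * w i0 :=
          le_trans (le_max_left _ _) (le_trans hnd (min_le_right _ _))
        have hwi : w i ≤ w i0 := hmax i hiB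
        obtain ⟨hz1, hz2⟩ := hzi
        exact ⟨by linarith, by linarith⟩
    -- disjointness of J i0 from the J's over B'
    have hdisj : Disjoint (Set.Icc (b i0) (b i0 + w' i0))
        (⋃ i ∈ B', Set.Icc (b i) (b i + w' i)) := by
      rw [Set.disjoint_iUnion₂_right]
      intro i hi
      have hfi := (Finset.mem_filter.mp hi).2
      have hd : Disjoint (Set.Icc (a i - 2 * w i) (a i + 3 * w i))
          (Set.Icc (a i0 - 2 * w i0) (a i0 + 3 * w i0)) := disj_Icc hfi
      exact hd.symm.mono (hsub i0 hi0) (hsub i (hB'B hi))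
    have hmeas' : MeasurableSet (⋃ i ∈ B', Set.Icc (b i) (b i + w' i)) :=
      MeasurableSet.biUnion B'.countable_toSet fun i _ => measurableSet_Icc
    -- volume estimates
    have h1 : volume (⋃ i ∈ B, Set.Icc (a i) (a i + w i)) ≤
        ENNReal.ofReal (15 * w i0) + volume (⋃ i ∈ B', Set.Icc (a i) (a i + w i)) := by
      calc volume (⋃ i ∈ B, Set.Icc (a i) (a i + w i))
          ≤ volume (Set.Icc (a i0 - 7 * w i0) (a i0 + 8 * w i0) ∪
              ⋃ i ∈ B', Set.Icc (a i) (a i + w i)) := measure_mono hcov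
        _ ≤ volume (Set.Icc (a i0 - 7 * w i0) (a i0 + 8 * w i0)) +
              volume (⋃ i ∈ B', Set.Icc (a i) (a i + w i)) := measure_union_le _ _
        _ = ENNReal.ofReal (15 * w i0) + volume (⋃ i ∈ B', Set.Icc (a i) (a i + w i)) := by
            rw [Real.volume_Icc]
            congr 1
            ring_nf
    have h2 : ENNReal.ofReal (w' i0) + volume (⋃ i ∈ B', Set.Icc (b i) (b i + w' i)) ≤
        volume (⋃ i ∈ B, Set.Icc (b i) (b i + w' i)) := by
      have hvol : volume (Set.Icc (b i0) (b i0 + w' i0)) = ENNReal.ofReal (w' i0) := by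
        rw [Real.volume_Icc]
        congr 1
        ring
      rw [← hvol, ← measure_union hdisj hmeas']
      apply measure_mono
      apply Set.union_subset
      · intro y hy
        exact Set.mem_biUnion hi0 hy
      · exact Set.biUnion_mono (fun i hi => hB'B hi) (fun i _ => le_refl _)
    calc ENNReal.ofReal (τ / 3) * volume (⋃ i ∈ B, Set.Icc (a i) (a i + w i))
        ≤ ENNReal.ofReal (τ / 3) *
            (ENNReal.ofReal (15 * w i0) + volume (⋃ i ∈ B', Set.Icc (a i) (a i + w i))) :=
          mul_le_mul_right h1 _
      _ = ENNReal.ofReal (τ / 3) * ENNReal.ofReal (15 * w i0) +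
            ENNReal.ofReal (τ / 3) * volume (⋃ i ∈ B', Set.Icc (a i) (a i + w i)) := mul_add _ _ _
      _ ≤ ENNReal.ofReal (w' i0) + volume (⋃ i ∈ B', Set.Icc (b i) (b i + w' i)) := by
          apply add_le_add _ IH
          rw [← ENNReal.ofReal_mul (by positivity)]
          apply ENNReal.ofReal_le_ofReal
          have := hw' i0 hi0
          linarith
      _ ≤ volume (⋃ i ∈ B, Set.Icc (b i) (b i + w' i)) := h2

/-- Geometric estimate II: if each `s_i ⊆ h_{u_i}` has the same horizontal extent as `u_i`
and `|s_i| ≥ τ|h_{u_i}|`, then `|⋃ s_i| ≥ (τ/54)|⋃ u_i|`. -/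
theorem stmt_10 (τ : ℝ) (hτ0 : 0 < τ) (hτ1 : τ < 1)
    {ι : Type} (A : Finset ι) (q p c m w c' m' w' : ι → ℝ)
    (hqp : ∀ i ∈ A, q i < p i) (hw : ∀ i ∈ A, 0 < w i) (hw' : ∀ i ∈ A, 0 < w' i)
    (hsub : ∀ i ∈ A, vpar (q i) (p i) (c' i) (m' i) (w' i) ⊆ hpar (q i) (p i) (c i) (m i) (w i))
    (harea : ∀ i ∈ A,
      ENNReal.ofReal τ * volume (hpar (q i) (p i) (c i) (m i) (w i)) ≤
        volume (vpar (q i) (p i) (c' i) (m' i) (w' i))) :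
    ENNReal.ofReal (τ / 54) * volume (⋃ i ∈ A, vpar (q i) (p i) (c i) (m i) (w i)) ≤
      volume (⋃ i ∈ A, vpar (q i) (p i) (c' i) (m' i) (w' i)) := by
  classical
  have hkey : ∀ i ∈ A, 5 * τ * w i ≤ w' i := by
    intro i hi
    have h := harea i hi
    rw [show hpar (q i) (p i) (c i) (m i) (w i) =
        vpar (q i) (p i) (c i - 2 * w i) (m i) (5 * w i) from rfl,
      volume_vpar, volume_vpar] at h
    have hpq : 0 < p i - q i := sub_pos.mpr (hqp i hi)
    have hwi := hw i hi
    have hwi' := hw' i hi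
    rw [← ENNReal.ofReal_mul hpq.le, ← ENNReal.ofReal_mul hpq.le,
      ← ENNReal.ofReal_mul hτ0.le] at h
    rw [ENNReal.ofReal_le_ofReal_iff (by positivity)] at h
    have h' : (p i - q i) * (5 * τ * w i) ≤ (p i - q i) * w' i := by nlinarith
    exact le_of_mul_le_mul_left h' hpq
  have hms : ∀ (cc mm ww : ι → ℝ),
      MeasurableSet (⋃ i ∈ A, vpar (q i) (p i) (cc i) (mm i) (ww i)) :=
    fun cc mm ww => MeasurableSet.biUnion A.countable_toSet fun i _ => measurableSet_vpar _ _ _ _ _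
  rw [MeasureTheory.Measure.volume_eq_prod ℝ ℝ, Measure.prod_apply (hms c m w), Measure.prod_apply (hms c' m' w')]
  rw [← MeasureTheory.lintegral_const_mul' _ _ (by exact ENNReal.ofReal_ne_top)]
  apply lintegral_mono
  intro x
  dsimp only
  set B := A.filter (fun i => x ∈ Set.Icc (q i) (p i)) with hB
  have hsl : ∀ (cc mm ww : ι → ℝ),
      Prod.mk x ⁻¹' (⋃ i ∈ A, vpar (q i) (p i) (cc i) (mm i) (ww i)) =
        ⋃ i ∈ B, Set.Icc (cc i + mm i * x) (cc i + mm i * x + ww i) := by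
    intro cc mm ww
    rw [Set.preimage_iUnion₂]
    ext y
    simp only [Set.mem_iUnion, exists_prop, hB, Finset.mem_filter, Set.mem_preimage, vpar,
      Set.mem_setOf_eq]
    constructor
    · rintro ⟨i, hi, hy⟩
      obtain ⟨hx, hy2⟩ := hy
      exact ⟨i, ⟨hi, hx⟩, hy2⟩
    · rintro ⟨i, ⟨hi, hx⟩, hy⟩
      exact ⟨i, hi, hx, hy⟩
  rw [hsl c m w, hsl c' m' w']
  have hBA : ∀ i ∈ B, i ∈ A := fun i hi => (Finset.mem_filter.mp hi).1
  have main := one_dim τ hτ0 (fun i => c i + m i * x) w (fun i => c' i + m' i * x) w' B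
    (fun i hi => hw i (hBA i hi)) (fun i hi => hkey i (hBA i hi)) ?_
  · calc ENNReal.ofReal (τ / 54) *
        volume (⋃ i ∈ B, Set.Icc (c i + m i * x) (c i + m i * x + w i))
        ≤ ENNReal.ofReal (τ / 3) *
            volume (⋃ i ∈ B, Set.Icc (c i + m i * x) (c i + m i * x + w i)) :=
          mul_le_mul_left (ENNReal.ofReal_le_ofReal (by linarith)) _
      _ ≤ _ := main
  · intro i hi
    have hx : x ∈ Set.Icc (q i) (p i) := (Finset.mem_filter.mp hi).2
    have hi' := hBA i hi
    have h := Set.preimage_mono (f := Prod.mk x) (hsub i hi')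
    rw [show hpar (q i) (p i) (c i) (m i) (w i) =
        vpar (q i) (p i) (c i - 2 * w i) (m i) (5 * w i) from rfl] at h
    rw [vpar_slice, vpar_slice, if_pos hx, if_pos hx] at h
    have he : Set.Icc (c i - 2 * w i + m i * x) (c i - 2 * w i + m i * x + 5 * w i) =
        Set.Icc (c i + m i * x - 2 * w i) (c i + m i * x + 3 * w i) := by
      congr 1 <;> ring
    rw [he] at h
    exact h
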